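/- There exists a constant C_Γ > 0, depending only on the Schottky data, such that for every nonempty word 𝐚 ∈ W° and every letter b ∈ A with 𝐚 → b: C_Γ^{-1} |I_𝐚| ≤ |I_{𝐚b}| ≤ |I_𝐚|. -/

import Mathlib

open MeasureTheory Set Real Pointwise

noncomputable section

abbrev SL2 := Matrix.SpecialLinearGroup (Fin 2) ℝ

/-- The Möbius transformation of `ℝ` associated to `g ∈ SL(2,ℝ)` (junk value at the pole). -/
def mobius (g : SL2) (x : ℝ) : ℝ :=
  (g 0 0 * x + g 0 1) / (g 1 0 * x + g 1 1)

/-- The derivative `γ'(x) = (cx+d)⁻²` of the Möbius transformation. -/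
def mobiusDeriv (g : SL2) (x : ℝ) : ℝ :=
  ((g 1 0 * x + g 1 1) ^ 2)⁻¹

/-- The derivative of the Möbius transformation in the ball model,
`|γ'(x)|_B = ((1+x²)/(1+γ(x)²)) γ'(x)`. -/
def mobiusDerivB (g : SL2) (x : ℝ) : ℝ :=
  ((1 + x ^ 2) / (1 + mobius g x ^ 2)) * mobiusDeriv g x

/-- The Möbius action of `SL(2,ℝ)` on `ℝ ∪ {∞}`. -/
def mobiusOP (g : SL2) (x : OnePoint ℝ) : OnePoint ℝ :=
  Option.elim x
    (if g 1 0 = 0 then OnePoint.infty else ((g 0 0 / g 1 0 : ℝ) : OnePoint ℝ))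
    (fun y => if g 1 0 * y + g 1 1 = 0 then OnePoint.infty
      else ((mobius g y : ℝ) : OnePoint ℝ))

/-- The pole `γ⁻¹(∞) = -d/c` of `γ = [[a,b],[c,d]]`. -/
def mobiusPole (g : SL2) : ℝ := -(g 1 1) / (g 1 0)

/-- The distortion factor `α(γ, [x₀,x₁]) = log((γ⁻¹(∞) − x₁)/(γ⁻¹(∞) − x₀))`,
with the convention `α = 0` when `γ⁻¹(∞) = ∞` (i.e. `c = 0`). -/
def alphaDist (g : SL2) (x₀ x₁ : ℝ) : ℝ :=
  if g 1 0 = 0 then 0 else Real.log ((mobiusPole g - x₁) / (mobiusPole g - x₀))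

/-- The letter `ā` paired with `a` in the alphabet `{1,…,2r}` (modelled by `Fin (2r)`). -/
def bar {r : ℕ} (a : Fin (2 * r)) : Fin (2 * r) :=
  if h : (a : ℕ) < r then ⟨(a : ℕ) + r, by omega⟩
  else ⟨(a : ℕ) - r, by have := a.isLt; omega⟩

/-- Schottky data: `2r` disjoint compact intervals `I_a = [ξ₀ a, ξ₁ a]` on the real line and
transformations `γ_a ∈ SL(2,ℝ)` with `γ_ā = γ_a⁻¹` such that `γ_a` maps the complement (in
`ℝ ∪ {∞}`) of the interior of `I_ā` onto `I_a`. -/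
structure SchottkyData (r : ℕ) where
  hr : 2 ≤ r
  ξ₀ : Fin (2 * r) → ℝ
  ξ₁ : Fin (2 * r) → ℝ
  hlt : ∀ a, ξ₀ a < ξ₁ a
  hdisj : ∀ a b, a ≠ b → Disjoint (Icc (ξ₀ a) (ξ₁ a)) (Icc (ξ₀ b) (ξ₁ b))
  γ : Fin (2 * r) → SL2
  hinv : ∀ a, γ (bar a) = (γ a)⁻¹
  hmap : ∀ a, mobiusOP (γ a) ''
      (univ \ ((fun t : ℝ => (t : OnePoint ℝ)) '' Ioo (ξ₀ (bar a)) (ξ₁ (bar a))))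
      = (fun t : ℝ => (t : OnePoint ℝ)) '' Icc (ξ₀ a) (ξ₁ a)

namespace SchottkyData

variable {r : ℕ}

/-- `l` is a word: no letter is followed by its bar. -/
def IsWord (_ : SchottkyData r) (l : List (Fin (2 * r))) : Prop :=
  l.Chain' fun p q => q ≠ bar p

/-- The group element `γ_𝐚 = γ_{a_1} ⋯ γ_{a_n}` of a word. -/
def wordγ (S : SchottkyData r) (l : List (Fin (2 * r))) : SL2 :=
  (l.map S.γ).prod

/-- The interval `I_𝐚 = γ_{𝐚'}(I_{a_n})` of a nonempty word (and `∅` for the empty word). -/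
def wordI (S : SchottkyData r) (l : List (Fin (2 * r))) : Set ℝ :=
  if h : l = [] then ∅
  else mobius (S.wordγ l.dropLast) '' Icc (S.ξ₀ (l.getLast h)) (S.ξ₁ (l.getLast h))

/-- The limit set `Λ_Γ = ⋂_n ⋃_{𝐚 ∈ W_n} I_𝐚`. -/
def limitSet (S : SchottkyData r) : Set ℝ :=
  ⋂ n : ℕ, ⋃ (l : List (Fin (2 * r))) (_ : S.IsWord l ∧ l.length = n + 1), S.wordI l

/-- `μ` is the (δ-conformal) Patterson–Sullivan measure: a Borel probability measure
supported on the limit set satisfying the equivariance property under the group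
generated by the Schottky transformations. -/
def IsPS (S : SchottkyData r) (δ : ℝ) (μ : Measure ℝ) : Prop :=
  IsProbabilityMeasure μ ∧ μ S.limitSetᶜ = 0 ∧
    ∀ g ∈ Subgroup.closure (Set.range S.γ), ∀ f : ℝ → ℝ, Measurable f →
      (∃ C, ∀ x, |f x| ≤ C) →
      ∫ x, f x ∂μ = ∫ x, f (mobius g x) * mobiusDerivB g x ^ δ ∂μ

/-- The partition `Z(τ) = {𝐚 ∈ W° : |I_𝐚| ≤ τ < |I_{𝐚'}|}` (with `|I_∅| = ∞`). -/
def Zpart (S : SchottkyData r) (τ : ℝ) : Set (List (Fin (2 * r))) :=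
  {l | S.IsWord l ∧ l ≠ [] ∧ (MeasureTheory.volume (S.wordI l)).toReal ≤ τ ∧
    (l.dropLast = [] ∨ τ < (MeasureTheory.volume (S.wordI l.dropLast)).toReal)}

end SchottkyData

/-- The length `|I|` of an interval `I ⊂ ℝ`. -/
def ivlen (I : Set ℝ) : ℝ := (MeasureTheory.volume I).toReal

/-- `𝐚 ⇝ 𝐛` : the last letter of `𝐚` equals the first letter of `𝐛`. -/
def chn {X : Type*} (l m : List X) : Prop :=
  ∃ (h1 : l ≠ []) (h2 : m ≠ []), l.getLast h1 = m.head h2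

/-- The center of an interval. -/
def ctr (I : Set ℝ) : ℝ := (sInf I + sSup I) / 2

end

/-!
Write `𝐚 = 𝐚' a` and let `p` be the pole of `γ = γ_{𝐚'}`, whose lower-left entry is `c`. Then
`I_𝐚 = γ [u, v]` with `[u, v] = I_a`, and `I_{𝐚b} = γ [u', v']` with `[u', v'] = γ_a(I_b) ⊆ [u, v]`.
Since `γ y - γ x = (y - x) / (c² (x - p) (y - p))`, the ratio `|I_{𝐚b}| / |I_𝐚|` is
`(v' - u') / (v - u)`, bounded below as only finitely many pairs `(a, b)` occur, times
`(u - p) (v - p) / ((u' - p) (v' - p))`. The pole lies in `I_ē`, where `e` is the last letter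
of `𝐚'`, and `ē ≠ a`; so `p` stays away from `[u, v]` and this factor is at least the smallest gap between
two intervals `I_e` divided by the diameter of their union. The upper bound is the monotonicity
of `γ` on `[u, v]`.
-/

def mobiusDen (g : SL2) (x : ℝ) : ℝ := g 1 0 * x + g 1 1

lemma mobius_eq_div (g : SL2) (x : ℝ) : mobius g x = (g 0 0 * x + g 0 1) / mobiusDen g x := rfl

lemma mobiusOP_coe (g : SL2) (x : ℝ) :
    mobiusOP g x = if mobiusDen g x = 0 then OnePoint.infty else (mobius g x : OnePoint ℝ) := rfl

lemma SL2.det_eq_one (g : SL2) : g 0 0 * g 1 1 - g 0 1 * g 1 0 = 1 := by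
  have := g.prop
  rwa [Matrix.det_fin_two] at this

lemma SL2.mul_apply (A B : SL2) (i j : Fin 2) : (A * B) i j = A i 0 * B 0 j + A i 1 * B 1 j := by
  simp [Matrix.SpecialLinearGroup.coe_mul, Matrix.mul_apply, Fin.sum_univ_two]

lemma mobiusDen_mul (A B : SL2) {x : ℝ} (h : mobiusDen B x ≠ 0) :
    mobiusDen (A * B) x = mobiusDen A (mobius B x) * mobiusDen B x := by
  simp only [mobiusDen, mobius, SL2.mul_apply] at h ⊢
  field_simp
  ring

lemma mobius_mul (A B : SL2) {x : ℝ} (h : mobiusDen B x ≠ 0) :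
    mobius (A * B) x = mobius A (mobius B x) := by
  rw [mobius_eq_div (A * B), mobiusDen_mul A B h, mobius_eq_div A]
  simp only [mobiusDen, mobius, SL2.mul_apply] at h ⊢
  field_simp
  ring

lemma mobius_sub (g : SL2) {x y : ℝ} (hx : mobiusDen g x ≠ 0) (hy : mobiusDen g y ≠ 0) :
    mobius g y - mobius g x = (y - x) / (mobiusDen g x * mobiusDen g y) := by
  rw [mobius_eq_div, mobius_eq_div, div_sub_div _ _ hy hx]
  congr 1
  · unfold mobiusDen
    linear_combination (y - x) * SL2.det_eq_one g
  · ring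

lemma mobiusDen_eq_mul_sub_pole (g : SL2) (hc : g 1 0 ≠ 0) (x : ℝ) :
    mobiusDen g x = g 1 0 * (x - mobiusPole g) := by
  rw [mobiusDen, mobiusPole]
  field_simp
  ring

lemma mobiusDen_of_eq_zero (g : SL2) (hc : g 1 0 = 0) (x : ℝ) : mobiusDen g x = g 1 1 := by
  simp [mobiusDen, hc]

lemma SL2.apply_one_one_ne_zero (g : SL2) (hc : g 1 0 = 0) : g 1 1 ≠ 0 := by
  intro h
  simpa [hc, h] using SL2.det_eq_one g

lemma continuous_mobiusDen (g : SL2) : Continuous (mobiusDen g) :=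
  (continuous_const.mul continuous_id).add continuous_const

lemma mobiusDen_mul_pos (g : SL2) {x y : ℝ} (h : ∀ z ∈ uIcc x y, mobiusDen g z ≠ 0) :
    0 < mobiusDen g x * mobiusDen g y := by
  by_contra! hneg
  have hzero : (0 : ℝ) ∈ uIcc (mobiusDen g x) (mobiusDen g y) := by
    rw [mem_uIcc]
    rcases mul_nonpos_iff.mp hneg with ⟨h₁, h₂⟩ | ⟨h₁, h₂⟩
    exacts [Or.inr ⟨h₂, h₁⟩, Or.inl ⟨h₁, h₂⟩]
  obtain ⟨z, hz, hz0⟩ := intermediate_value_uIcc (continuous_mobiusDen g).continuousOn hzero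
  exact h z hz hz0

lemma mobius_strictMonoOn (g : SL2) {u v : ℝ} (h : ∀ z ∈ Icc u v, mobiusDen g z ≠ 0) :
    StrictMonoOn (mobius g) (Icc u v) := by
  intro x hx y hy hxy
  have hpos := mobiusDen_mul_pos g fun z hz => h z (uIcc_subset_Icc hx hy hz)
  have hdiff : 0 < mobius g y - mobius g x := by
    rw [mobius_sub g (h x hx) (h y hy)]
    exact div_pos (sub_pos.2 hxy) hpos
  linarith

lemma mobius_image_Icc (g : SL2) {u v : ℝ} (huv : u ≤ v) (h : ∀ z ∈ Icc u v, mobiusDen g z ≠ 0) :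
    mobius g '' Icc u v = Icc (mobius g u) (mobius g v) := by
  refine Subset.antisymm ?_ (intermediate_value_Icc huv ?_)
  · exact (mobius_strictMonoOn g h).monotoneOn.image_Icc_subset
  · exact (by fun_prop : Continuous fun x => g 0 0 * x + g 0 1).continuousOn.div
      (continuous_mobiusDen g).continuousOn h

lemma ivlen_Icc {a b : ℝ} (h : a ≤ b) : ivlen (Icc a b) = b - a := by
  rw [ivlen, Real.volume_Icc, ENNReal.toReal_ofReal (by linarith)]

lemma ivlen_mobius_image_Icc (g : SL2) {u v : ℝ} (huv : u ≤ v)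
    (h : ∀ z ∈ Icc u v, mobiusDen g z ≠ 0) :
    ivlen (mobius g '' Icc u v) = mobius g v - mobius g u := by
  rw [mobius_image_Icc g huv h, ivlen_Icc]
  exact (mobius_strictMonoOn g h).monotoneOn (left_mem_Icc.2 huv) (right_mem_Icc.2 huv) huv

lemma mul_sub_mul_sub_le {p u u' v' v d D : ℝ} (hu : u ≤ u') (hu'v' : u' ≤ v') (hv : v' ≤ v)
    (hd : 0 < d) (hp : ∀ x ∈ Icc u v, d ≤ |x - p| ∧ |x - p| ≤ D) :
    d * ((u' - p) * (v' - p)) ≤ D * ((u - p) * (v - p)) := by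
  have hu_p := hp u ⟨le_rfl, by linarith⟩
  have hv_p := hp v ⟨by linarith, le_rfl⟩
  have hu'_p := (hp u' ⟨hu, by linarith⟩).2
  have hv'_p := (hp v' ⟨by linarith, hv⟩).2
  rcases lt_or_ge p u with hpu | hup
  · rw [abs_of_pos (by linarith)] at hu_p hu'_p
    have h := mul_le_mul (mul_le_mul hu_p.1 hu'_p (by linarith) (by linarith))
      (by linarith : v' - p ≤ v - p) (by linarith) (mul_nonneg (by linarith) (by linarith))
    linarith
  · have hvp : v < p := by
      by_contra! hpv
      have := (hp p ⟨hup, hpv⟩).1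
      rw [sub_self, abs_zero] at this
      linarith
    rw [abs_of_neg (by linarith)] at hv_p hv'_p
    have h := mul_le_mul (mul_le_mul hv_p.1 hv'_p (by linarith) (by linarith))
      (by linarith : -(u' - p) ≤ -(u - p)) (by linarith) (mul_nonneg (by linarith) (by linarith))
    linarith

lemma mobius_distortion (g : SL2) {u u' v' v d D : ℝ} (hu : u ≤ u') (hu'v' : u' ≤ v')
    (hv : v' ≤ v) (hd : 0 < d) (hdD : d ≤ D)
    (hpole : g 1 0 ≠ 0 → ∀ x ∈ Icc u v, d ≤ |x - mobiusPole g| ∧ |x - mobiusPole g| ≤ D) :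
    d * (v' - u') * (mobius g v - mobius g u) ≤ D * (v - u) * (mobius g v' - mobius g u') := by
  have hden : ∀ z ∈ Icc u v, mobiusDen g z ≠ 0 := by
    intro z hz
    rcases eq_or_ne (g 1 0) 0 with hc | hc
    · rw [mobiusDen_of_eq_zero g hc]
      exact SL2.apply_one_one_ne_zero g hc
    · rw [mobiusDen_eq_mul_sub_pole g hc]
      exact mul_ne_zero hc (abs_pos.mp (hd.trans_le (hpole hc z hz).1))
  have huv : u ≤ v := hu.trans (hu'v'.trans hv)
  have hsub : Icc u' v' ⊆ Icc u v := Icc_subset_Icc hu hv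
  have hP : 0 < mobiusDen g u * mobiusDen g v := mobiusDen_mul_pos g fun z hz =>
    hden z (uIcc_subset_Icc (left_mem_Icc.2 huv) (right_mem_Icc.2 huv) hz)
  have hP' : 0 < mobiusDen g u' * mobiusDen g v' := mobiusDen_mul_pos g fun z hz =>
    hden z (hsub (uIcc_subset_Icc (left_mem_Icc.2 hu'v') (right_mem_Icc.2 hu'v') hz))
  have key : d * (mobiusDen g u' * mobiusDen g v') ≤ D * (mobiusDen g u * mobiusDen g v) := by
    rcases eq_or_ne (g 1 0) 0 with hc | hc
    · simp only [mobiusDen_of_eq_zero g hc] at hP ⊢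
      exact mul_le_mul_of_nonneg_right hdD hP.le
    · suffices h : d * ((u' - mobiusPole g) * (v' - mobiusPole g))
          ≤ D * ((u - mobiusPole g) * (v - mobiusPole g)) by
        simp only [mobiusDen_eq_mul_sub_pole g hc]
        nlinarith [mul_le_mul_of_nonneg_left h (mul_self_nonneg (g 1 0))]
      exact mul_sub_mul_sub_le hu hu'v' hv hd (hpole hc)
  rw [mobius_sub g (hden u (left_mem_Icc.2 huv)) (hden v (right_mem_Icc.2 huv)),
    mobius_sub g (hden u' (hsub (left_mem_Icc.2 hu'v'))) (hden v' (hsub (right_mem_Icc.2 hu'v')))]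
  calc d * (v' - u') * ((v - u) / (mobiusDen g u * mobiusDen g v))
      = (v' - u') * (v - u) * (d / (mobiusDen g u * mobiusDen g v)) := by ring
    _ ≤ (v' - u') * (v - u) * (D / (mobiusDen g u' * mobiusDen g v')) :=
      mul_le_mul_of_nonneg_left ((div_le_div_iff₀ hP hP').2 key)
        (mul_nonneg (sub_nonneg.2 hu'v') (sub_nonneg.2 huv))
    _ = D * (v - u) * ((v' - u') / (mobiusDen g u' * mobiusDen g v')) := by ring

lemma exists_pos_le_of_forall_pos {ι : Type*} [Fintype ι] (p : ι → Prop) (f : ι → ℝ)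
    (hf : ∀ i, p i → 0 < f i) : ∃ m > 0, ∀ i, p i → m ≤ f i := by
  classical
  rcases (Finset.univ.filter p).eq_empty_or_nonempty with hs | hs
  · refine ⟨1, one_pos, fun i hi => ?_⟩
    simpa [hs] using Finset.mem_filter.mpr ⟨Finset.mem_univ i, hi⟩
  · refine ⟨_, (Finset.lt_inf'_iff hs).2 fun i hi => hf i (Finset.mem_filter.mp hi).2,
      fun i hi => Finset.inf'_le _ (Finset.mem_filter.mpr ⟨Finset.mem_univ i, hi⟩)⟩

namespace SchottkyData

variable {r : ℕ} (S : SchottkyData r)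

lemma not_mem_Ioo_of_mem_Icc {a c : Fin (2 * r)} (h : a ≠ c) {z : ℝ}
    (hz : z ∈ Icc (S.ξ₀ a) (S.ξ₁ a)) : z ∉ Ioo (S.ξ₀ c) (S.ξ₁ c) :=
  fun hmem => disjoint_left.mp (S.hdisj a c h) hz (Ioo_subset_Icc_self hmem)

lemma mobiusDen_γ_ne_zero_and_mem (a : Fin (2 * r)) {x : ℝ}
    (hx : x ∉ Ioo (S.ξ₀ (bar a)) (S.ξ₁ (bar a))) :
    mobiusDen (S.γ a) x ≠ 0 ∧ mobius (S.γ a) x ∈ Icc (S.ξ₀ a) (S.ξ₁ a) := by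
  have hmem : (x : OnePoint ℝ) ∈
      univ \ ((fun t : ℝ => (t : OnePoint ℝ)) '' Ioo (S.ξ₀ (bar a)) (S.ξ₁ (bar a))) :=
    ⟨trivial, fun ⟨t, ht, hte⟩ => hx (OnePoint.coe_injective hte ▸ ht)⟩
  obtain ⟨t, ht, hte⟩ := S.hmap a ▸ mem_image_of_mem _ hmem
  rw [mobiusOP_coe] at hte
  by_cases hd : mobiusDen (S.γ a) x = 0
  · simp [hd] at hte
  · rw [if_neg hd, OnePoint.coe_eq_coe] at hte
    exact ⟨hd, hte ▸ ht⟩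

lemma wordγ_cons (a : Fin (2 * r)) (t : List (Fin (2 * r))) :
    S.wordγ (a :: t) = S.γ a * S.wordγ t := by
  simp [wordγ]

lemma wordγ_append_singleton (l : List (Fin (2 * r))) (a : Fin (2 * r)) :
    S.wordγ (l ++ [a]) = S.wordγ l * S.γ a := by
  simp [wordγ]

lemma mobiusDen_wordγ_ne_zero_and_mem (a : Fin (2 * r)) (t : List (Fin (2 * r)))
    (hw : S.IsWord (a :: t)) {x : ℝ}
    (hx : x ∉ Ioo (S.ξ₀ (bar ((a :: t).getLast (List.cons_ne_nil a t))))
      (S.ξ₁ (bar ((a :: t).getLast (List.cons_ne_nil a t))))) :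
    mobiusDen (S.wordγ (a :: t)) x ≠ 0 ∧
      mobius (S.wordγ (a :: t)) x ∈ Icc (S.ξ₀ a) (S.ξ₁ a) := by
  induction t generalizing a with
  | nil => simpa [wordγ] using S.mobiusDen_γ_ne_zero_and_mem a hx
  | cons c t ih =>
    obtain ⟨hca, hw'⟩ := List.isChain_cons_cons.mp hw
    obtain ⟨hden, hmem⟩ := ih c hw' (by simpa using hx)
    obtain ⟨hden', hmem'⟩ :=
      S.mobiusDen_γ_ne_zero_and_mem a (S.not_mem_Ioo_of_mem_Icc hca hmem)
    rw [wordγ_cons, mobiusDen_mul _ _ hden, mobius_mul _ _ hden]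
    exact ⟨mul_ne_zero hden' hden, hmem'⟩

lemma wordγ_one_zero_ne_zero {a : Fin (2 * r)} {t : List (Fin (2 * r))} (hw : S.IsWord (a :: t)) :
    S.wordγ (a :: t) 1 0 ≠ 0 := by
  set e := bar ((a :: t).getLast (List.cons_ne_nil a t))
  intro hc
  have hd := SL2.apply_one_one_ne_zero _ hc
  have hx : S.ξ₁ e ∉ Ioo (S.ξ₀ e) (S.ξ₁ e) := fun h => lt_irrefl _ h.2
  -- an affine `γ_𝐚` would stretch the unbounded complement of `I_e` beyond the bounded `I_a`
  set y := S.ξ₁ e + (S.ξ₁ a - S.ξ₀ a + 1) * (S.wordγ (a :: t) 1 1 * S.wordγ (a :: t) 1 1)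
  have hy : y ∉ Ioo (S.ξ₀ e) (S.ξ₁ e) := fun h => by
    nlinarith [h.2, S.hlt a, mul_self_nonneg (S.wordγ (a :: t) 1 1)]
  obtain ⟨hdx, hmx⟩ := S.mobiusDen_wordγ_ne_zero_and_mem a t hw hx
  obtain ⟨hdy, hmy⟩ := S.mobiusDen_wordγ_ne_zero_and_mem a t hw hy
  have hsub := mobius_sub _ hdx hdy
  rw [mobiusDen_of_eq_zero _ hc, mobiusDen_of_eq_zero _ hc, add_sub_cancel_left,
    mul_div_cancel_right₀ _ (mul_self_ne_zero.mpr hd)] at hsub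
  linarith [hmx.1, hmy.2]

lemma mobiusPole_wordγ_mem {a : Fin (2 * r)} {t : List (Fin (2 * r))} (hw : S.IsWord (a :: t)) :
    mobiusPole (S.wordγ (a :: t)) ∈ Ioo (S.ξ₀ (bar ((a :: t).getLast (List.cons_ne_nil a t))))
      (S.ξ₁ (bar ((a :: t).getLast (List.cons_ne_nil a t)))) := by
  by_contra hp
  apply (S.mobiusDen_wordγ_ne_zero_and_mem a t hw hp).1
  rw [mobiusDen_eq_mul_sub_pole _ (S.wordγ_one_zero_ne_zero hw), sub_self, mul_zero]

lemma ne_bar_getLast_of_isWord_append {l : List (Fin (2 * r))} {a : Fin (2 * r)}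
    (hw : S.IsWord (l ++ [a])) (hl : l ≠ []) : a ≠ bar (l.getLast hl) :=
  (List.isChain_append.mp hw).2.2 _ (List.getLast?_eq_some_getLast hl) _ rfl

lemma mobiusDen_wordγ_ne_zero {l : List (Fin (2 * r))} {a : Fin (2 * r)}
    (hw : S.IsWord (l ++ [a])) : ∀ z ∈ Icc (S.ξ₀ a) (S.ξ₁ a), mobiusDen (S.wordγ l) z ≠ 0 := by
  intro z hz
  rcases eq_or_ne l [] with rfl | hl
  · simp [wordγ, mobiusDen]
  · have hz' := S.not_mem_Ioo_of_mem_Icc (S.ne_bar_getLast_of_isWord_append hw hl) hz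
    obtain ⟨b, t, rfl⟩ := List.exists_cons_of_ne_nil hl
    exact (S.mobiusDen_wordγ_ne_zero_and_mem b t (hw.prefix (List.prefix_append _ _)) hz').1

lemma exists_mobiusPole_wordγ_mem {l : List (Fin (2 * r))} {a : Fin (2 * r)}
    (hw : S.IsWord (l ++ [a])) (hc : S.wordγ l 1 0 ≠ 0) :
    ∃ e ≠ a, mobiusPole (S.wordγ l) ∈ Icc (S.ξ₀ e) (S.ξ₁ e) := by
  have hl : l ≠ [] := by
    rintro rfl
    simp [wordγ] at hc
  refine ⟨_, (S.ne_bar_getLast_of_isWord_append hw hl).symm, ?_⟩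
  obtain ⟨b, t, rfl⟩ := List.exists_cons_of_ne_nil hl
  exact Ioo_subset_Icc_self (S.mobiusPole_wordγ_mem (hw.prefix (List.prefix_append _ _)))

lemma child_interval_bounds {a b : Fin (2 * r)} (hab : b ≠ bar a) :
    S.ξ₀ a ≤ mobius (S.γ a) (S.ξ₀ b) ∧ mobius (S.γ a) (S.ξ₀ b) < mobius (S.γ a) (S.ξ₁ b) ∧
      mobius (S.γ a) (S.ξ₁ b) ≤ S.ξ₁ a := by
  have hb : ∀ z ∈ Icc (S.ξ₀ b) (S.ξ₁ b),
      mobiusDen (S.γ a) z ≠ 0 ∧ mobius (S.γ a) z ∈ Icc (S.ξ₀ a) (S.ξ₁ a) :=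
    fun z hz => S.mobiusDen_γ_ne_zero_and_mem a (S.not_mem_Ioo_of_mem_Icc hab hz)
  have h₀ : S.ξ₀ b ∈ Icc (S.ξ₀ b) (S.ξ₁ b) := ⟨le_rfl, (S.hlt b).le⟩
  have h₁ : S.ξ₁ b ∈ Icc (S.ξ₀ b) (S.ξ₁ b) := ⟨(S.hlt b).le, le_rfl⟩
  exact ⟨(hb _ h₀).2.1, mobius_strictMonoOn _ (fun z hz => (hb z hz).1) h₀ h₁ (S.hlt b),
    (hb _ h₁).2.2⟩

lemma wordI_append_singleton (l : List (Fin (2 * r))) (b : Fin (2 * r)) :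
    S.wordI (l ++ [b]) = mobius (S.wordγ l) '' Icc (S.ξ₀ b) (S.ξ₁ b) := by
  simp [wordI]

lemma wordI_append_append (l : List (Fin (2 * r))) {a b : Fin (2 * r)} (hab : b ≠ bar a) :
    S.wordI (l ++ [a] ++ [b]) =
      mobius (S.wordγ l) '' Icc (mobius (S.γ a) (S.ξ₀ b)) (mobius (S.γ a) (S.ξ₁ b)) := by
  have hb : ∀ z ∈ Icc (S.ξ₀ b) (S.ξ₁ b), mobiusDen (S.γ a) z ≠ 0 :=
    fun z hz => (S.mobiusDen_γ_ne_zero_and_mem a (S.not_mem_Ioo_of_mem_Icc hab hz)).1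
  rw [wordI_append_singleton, wordγ_append_singleton, ← mobius_image_Icc _ (S.hlt b).le hb,
    image_image]
  exact image_congr fun z hz => mobius_mul _ _ (hb z hz)

lemma gap_pos {a b : Fin (2 * r)} (hab : a ≠ b) :
    0 < max (S.ξ₀ b - S.ξ₁ a) (S.ξ₀ a - S.ξ₁ b) := by
  by_contra! h
  obtain ⟨hba, hab'⟩ := max_le_iff.mp h
  have hz : max (S.ξ₀ a) (S.ξ₀ b) ∈ Icc (S.ξ₀ a) (S.ξ₁ a) ∩ Icc (S.ξ₀ b) (S.ξ₁ b) :=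
    ⟨⟨le_max_left _ _, max_le (S.hlt a).le (by linarith)⟩,
      ⟨le_max_right _ _, max_le (by linarith) (S.hlt b).le⟩⟩
  exact disjoint_left.mp (S.hdisj a b hab) hz.1 hz.2

lemma exists_gap : ∃ d > 0, ∀ a b, a ≠ b → ∀ x ∈ Icc (S.ξ₀ a) (S.ξ₁ a),
    ∀ y ∈ Icc (S.ξ₀ b) (S.ξ₁ b), d ≤ |x - y| := by
  obtain ⟨d, hd, hgap⟩ := exists_pos_le_of_forall_pos
    (fun ab : Fin (2 * r) × Fin (2 * r) => ab.1 ≠ ab.2)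
    (fun ab => max (S.ξ₀ ab.2 - S.ξ₁ ab.1) (S.ξ₀ ab.1 - S.ξ₁ ab.2)) fun _ hab => S.gap_pos hab
  refine ⟨d, hd, fun a b hab x hx y hy => (hgap (a, b) hab).trans (max_le ?_ ?_)⟩
  · linarith [neg_abs_le (x - y), hx.2, hy.1]
  · linarith [le_abs_self (x - y), hx.1, hy.2]

lemma exists_diam_bound : ∃ D, ∀ a b, ∀ x ∈ Icc (S.ξ₀ a) (S.ξ₁ a),
    ∀ y ∈ Icc (S.ξ₀ b) (S.ξ₁ b), |x - y| ≤ D := by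
  obtain ⟨D, hD⟩ :=
    Finite.bddAbove_range fun ab : Fin (2 * r) × Fin (2 * r) => S.ξ₁ ab.1 - S.ξ₀ ab.2
  refine ⟨D, fun a b x hx y hy => abs_sub_le_iff.mpr ⟨?_, ?_⟩⟩
  · linarith [hD ⟨(a, b), rfl⟩, hx.2, hy.1]
  · linarith [hD ⟨(b, a), rfl⟩, hx.1, hy.2]

lemma exists_length_bound : ∃ L > 0, ∀ a, S.ξ₁ a - S.ξ₀ a ≤ L := by
  obtain ⟨L, hL⟩ := Finite.bddAbove_range fun a => S.ξ₁ a - S.ξ₀ a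
  exact ⟨max L 1, by positivity, fun a => le_max_of_le_left (hL ⟨a, rfl⟩)⟩

lemma exists_child_length_bound : ∃ m > 0, ∀ a b, b ≠ bar a →
    m ≤ mobius (S.γ a) (S.ξ₁ b) - mobius (S.γ a) (S.ξ₀ b) := by
  obtain ⟨m, hm, h⟩ := exists_pos_le_of_forall_pos
    (fun ab : Fin (2 * r) × Fin (2 * r) => ab.2 ≠ bar ab.1)
    (fun ab => mobius (S.γ ab.1) (S.ξ₁ ab.2) - mobius (S.γ ab.1) (S.ξ₀ ab.2))
    fun ⟨a, b⟩ hab => sub_pos.mpr (S.child_interval_bounds hab).2.1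
  exact ⟨m, hm, fun a b hab => h (a, b) hab⟩

lemma ivlen_wordI_append_append_bounds {l : List (Fin (2 * r))} {a b : Fin (2 * r)}
    (hw : S.IsWord (l ++ [a] ++ [b])) {d D : ℝ} (hd : 0 < d) (hdD : d ≤ D)
    (hsep : ∀ a b, a ≠ b → ∀ x ∈ Icc (S.ξ₀ a) (S.ξ₁ a), ∀ y ∈ Icc (S.ξ₀ b) (S.ξ₁ b), d ≤ |x - y|)
    (hdiam : ∀ a b, ∀ x ∈ Icc (S.ξ₀ a) (S.ξ₁ a), ∀ y ∈ Icc (S.ξ₀ b) (S.ξ₁ b), |x - y| ≤ D) :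
    d * (mobius (S.γ a) (S.ξ₁ b) - mobius (S.γ a) (S.ξ₀ b)) * ivlen (S.wordI (l ++ [a]))
        ≤ D * (S.ξ₁ a - S.ξ₀ a) * ivlen (S.wordI (l ++ [a] ++ [b])) ∧
      ivlen (S.wordI (l ++ [a] ++ [b])) ≤ ivlen (S.wordI (l ++ [a])) := by
  have hw' : S.IsWord (l ++ [a]) := hw.prefix (List.prefix_append _ _)
  have hab : b ≠ bar a := by
    simpa using S.ne_bar_getLast_of_isWord_append hw (by simp)
  obtain ⟨hu, hu'v', hv⟩ := S.child_interval_bounds hab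
  have hden := S.mobiusDen_wordγ_ne_zero hw'
  have hpole : S.wordγ l 1 0 ≠ 0 → ∀ x ∈ Icc (S.ξ₀ a) (S.ξ₁ a),
      d ≤ |x - mobiusPole (S.wordγ l)| ∧ |x - mobiusPole (S.wordγ l)| ≤ D := by
    intro hc x hx
    obtain ⟨e, hea, he⟩ := S.exists_mobiusPole_wordγ_mem hw' hc
    exact ⟨hsep a e hea.symm x hx _ he, hdiam a e x hx _ he⟩
  rw [S.wordI_append_append l hab, S.wordI_append_singleton,
    ivlen_mobius_image_Icc _ hu'v'.le fun z hz => hden z ⟨hu.trans hz.1, hz.2.trans hv⟩,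
    ivlen_mobius_image_Icc _ (S.hlt a).le hden]
  refine ⟨mobius_distortion _ hu hu'v'.le hv hd hdD hpole, ?_⟩
  have hmono := (mobius_strictMonoOn _ hden).monotoneOn
  have hgu := hmono ⟨le_rfl, (S.hlt a).le⟩ ⟨hu, hu'v'.le.trans hv⟩ hu
  have hgv := hmono ⟨hu.trans hu'v'.le, hv⟩ ⟨(S.hlt a).le, le_rfl⟩ hv
  linarith

end SchottkyData

/-- **Parent–child ratio:** there is `C_Γ > 0` depending only on the Schottky data such that
`C_Γ⁻¹|I_𝐚| ≤ |I_{𝐚b}| ≤ |I_𝐚|` for all nonempty words `𝐚` and letters `b` with `𝐚 → b`. -/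
theorem parent_child (r : ℕ) (S : SchottkyData r) :
    ∃ C > (0 : ℝ), ∀ (l : List (Fin (2 * r))) (b : Fin (2 * r)),
      l ≠ [] → S.IsWord (l ++ [b]) →
      C⁻¹ * ivlen (S.wordI l) ≤ ivlen (S.wordI (l ++ [b])) ∧
      ivlen (S.wordI (l ++ [b])) ≤ ivlen (S.wordI l) := by
  obtain ⟨d, hd, hsep⟩ := S.exists_gap
  obtain ⟨D, hdiam⟩ := S.exists_diam_bound
  obtain ⟨L, hL, hlen⟩ := S.exists_length_bound
  obtain ⟨m, hm, hchild⟩ := S.exists_child_length_bound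
  refine ⟨max D d * L / (d * m), by positivity, fun l b hl hw => ?_⟩
  obtain ⟨l, a, rfl⟩ : ∃ l' a, l = l' ++ [a] := ⟨_, _, (List.dropLast_append_getLast hl).symm⟩
  have hab : b ≠ bar a := by simpa using S.ne_bar_getLast_of_isWord_append hw (by simp)
  obtain ⟨hdist, hle⟩ := S.ivlen_wordI_append_append_bounds hw hd (le_max_right D d) hsep
    fun a b x hx y hy => le_max_of_le_left (hdiam a b x hx y hy)
  refine ⟨?_, hle⟩
  rw [inv_div, div_mul_eq_mul_div, div_le_iff₀ (by positivity)]
  calc d * m * ivlen (S.wordI (l ++ [a]))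
      ≤ d * (mobius (S.γ a) (S.ξ₁ b) - mobius (S.γ a) (S.ξ₀ b)) * ivlen (S.wordI (l ++ [a])) := by
        gcongr
        exacts [ENNReal.toReal_nonneg, hchild a b hab]
    _ ≤ max D d * (S.ξ₁ a - S.ξ₀ a) * ivlen (S.wordI (l ++ [a] ++ [b])) := hdist
    _ ≤ ivlen (S.wordI (l ++ [a] ++ [b])) * (max D d * L) := by
        rw [mul_comm]
        gcongr
        exacts [ENNReal.toReal_nonneg, hlen a]
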